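/- arXiv:1410.8863 — 7 statements merged into one kernel-verified Lean document; each statement's English description precedes it below -/
import Mathlib

section
/- Let m ≥ 1, let r ∈ ℂ be a primitive m-th root of unity, and let a ∈ ℂ with a^m ≠ 1 and a ≠ −1. Then ∑_{n=0}^{m−1} 1/((a − r^n)(a − r^{−n})) = m·(a^m+1)/((a−1)(a+1)(a^m−1)). -/
/-!
For ζ ≠ 0 one has `(a - ζ)(a - ζ⁻¹) = (1 - aζ)(1 - aζ⁻¹)`, and writing `u = 1 - aζ`,
`v = 1 - aζ⁻¹` we have `u + v - uv = 1 - a²`, so each term equals `(1/u + 1/v - 1) / (1 - a²)`.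
Both `r` and `r⁻¹` are primitive `m`-th roots of unity, and `∑ₙ 1/(1 - b rⁿ) = m / (1 - bᵐ)`:
multiplying `1/(1 - b rⁿ)` by `1 - bᵐ` gives the geometric sum `∑ₖ bᵏ rⁿᵏ`, and summing over `n`
kills every `k ≠ 0`.
-/

open Finset

section

variable {K : Type*} [Field K] {m : ℕ} {r : K}

theorem IsPrimitiveRoot.sum_pow_pow_eq_zero (hr : IsPrimitiveRoot r m) {k : ℕ} (hk0 : k ≠ 0)
    (hkm : k < m) : ∑ n ∈ range m, (r ^ k) ^ n = 0 := by
  rw [geom_sum_eq (hr.pow_ne_one_of_pos_of_lt hk0 hkm), pow_right_comm, hr.pow_eq_one, one_pow,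
    sub_self, zero_div]

theorem IsPrimitiveRoot.one_sub_mul_pow_ne_zero {b : K} (hr : IsPrimitiveRoot r m)
    (hb : b ^ m ≠ 1) (n : ℕ) : 1 - b * r ^ n ≠ 0 := by
  intro h
  apply hb
  calc b ^ m = (b * r ^ n) ^ m := by
        rw [mul_pow, pow_right_comm, hr.pow_eq_one, one_pow, mul_one]
    _ = 1 := by rw [← sub_eq_zero.1 h, one_pow]

theorem IsPrimitiveRoot.sum_one_div_one_sub_mul_pow {b : K} (hr : IsPrimitiveRoot r m)
    (hb : b ^ m ≠ 1) : ∑ n ∈ range m, 1 / (1 - b * r ^ n) = m / (1 - b ^ m) := by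
  have hbm : 1 - b ^ m ≠ 0 := sub_ne_zero.2 hb.symm
  have hterm (n : ℕ) :
      1 / (1 - b * r ^ n) = (∑ k ∈ range m, (b * r ^ n) ^ k) / (1 - b ^ m) := by
    rw [div_eq_div_iff (hr.one_sub_mul_pow_ne_zero hb n) hbm, one_mul, mul_comm,
      mul_neg_geom_sum, mul_pow, pow_right_comm, hr.pow_eq_one, one_pow, mul_one]
  have hpowers : ∑ k ∈ range m, ∑ n ∈ range m, (b * r ^ n) ^ k = m := by
    obtain ⟨m, rfl⟩ : ∃ m', m = m' + 1 := Nat.exists_eq_succ_of_ne_zero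
      (by rintro rfl; exact hb (pow_zero b))
    rw [sum_range_succ']
    simp only [pow_zero, sum_const, card_range, nsmul_eq_mul, mul_one, add_eq_right]
    refine sum_eq_zero fun k hk => ?_
    simp_rw [mul_pow, pow_right_comm _ _ (k + 1)]
    rw [← mul_sum, hr.sum_pow_pow_eq_zero k.succ_ne_zero (by simpa using hk), mul_zero]
  rw [sum_congr rfl fun n _ => hterm n, ← sum_div, sum_comm, hpowers]

theorem one_div_sub_mul_sub_inv {a ζ : K} (hζ : ζ ≠ 0) (ha : a ^ 2 ≠ 1) (h₁ : 1 - a * ζ ≠ 0)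
    (h₂ : 1 - a * ζ⁻¹ ≠ 0) :
    1 / ((a - ζ) * (a - ζ⁻¹)) = (1 / (1 - a * ζ) + 1 / (1 - a * ζ⁻¹) - 1) / (1 - a ^ 2) := by
  have hζζ : ζ * ζ⁻¹ = 1 := mul_inv_cancel₀ hζ
  have hprod : (a - ζ) * (a - ζ⁻¹) = (1 - a * ζ) * (1 - a * ζ⁻¹) := by
    linear_combination (1 - a ^ 2) * hζζ
  have hsum : (1 - a * ζ) + (1 - a * ζ⁻¹) - (1 - a * ζ) * (1 - a * ζ⁻¹) = 1 - a ^ 2 := by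
    linear_combination (-a ^ 2) * hζζ
  rw [hprod, eq_div_iff (sub_ne_zero.2 ha.symm), ← hsum]
  generalize 1 - a * ζ = u at h₁ ⊢
  generalize 1 - a * ζ⁻¹ = v at h₂ ⊢
  field_simp
  ring

end

theorem stmt4_general (m : ℕ) (r : ℂ) (hr : IsPrimitiveRoot r m)
    (a : ℂ) (ha : a ^ m ≠ 1) (ha' : a ≠ -1) :
    ∑ n ∈ Finset.range m, 1 / ((a - r ^ n) * (a - r ^ (-(n : ℤ)))) =
      m * (a ^ m + 1) / ((a - 1) * (a + 1) * (a ^ m - 1)) := by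
  have hm : m ≠ 0 := by rintro rfl; exact ha (pow_zero a)
  have ha₁ : a - 1 ≠ 0 := sub_ne_zero.2 fun h => ha (by rw [h, one_pow])
  have ha₂ : a + 1 ≠ 0 := fun h => ha' (eq_neg_of_add_eq_zero_left h)
  have ha_sq : a ^ 2 ≠ 1 := fun h => mul_ne_zero ha₁ ha₂ (by linear_combination h)
  have hterm (n : ℕ) : 1 / ((a - r ^ n) * (a - r ^ (-(n : ℤ)))) =
      (1 / (1 - a * r ^ n) + 1 / (1 - a * r⁻¹ ^ n) - 1) / (1 - a ^ 2) := by
    rw [zpow_neg, zpow_natCast, inv_pow]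
    refine one_div_sub_mul_sub_inv (pow_ne_zero n (hr.ne_zero hm)) ha_sq
      (hr.one_sub_mul_pow_ne_zero ha n) ?_
    rw [← inv_pow]
    exact hr.inv.one_sub_mul_pow_ne_zero ha n
  rw [sum_congr rfl fun n _ => hterm n, ← sum_div, sum_sub_distrib, sum_add_distrib,
    hr.sum_one_div_one_sub_mul_pow ha, hr.inv.sum_one_div_one_sub_mul_pow ha, sum_const,
    card_range, nsmul_eq_mul, mul_one]
  have ham : a ^ m - 1 ≠ 0 := sub_ne_zero.2 ha
  have ham' : 1 - a ^ m ≠ 0 := sub_ne_zero.2 (Ne.symm ha)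
  have ha_sq' : 1 - a ^ 2 ≠ 0 := sub_ne_zero.2 (Ne.symm ha_sq)
  rw [div_eq_div_iff ha_sq' (mul_ne_zero (mul_ne_zero ha₁ ha₂) ham)]
  field_simp
  ring

/-- Partial-fraction style identity for a primitive `m`-th root of unity `r`:
`∑_{n=0}^{m−1} 1/((a − r^n)(a − r^{−n})) = m·(a^m+1)/((a−1)(a+1)(a^m−1))`. -/
theorem stmt4 (m : ℕ) (hm : 1 ≤ m) (r : ℂ) (hr : IsPrimitiveRoot r m)
    (a : ℂ) (ha : a ^ m ≠ 1) (ha' : a ≠ -1) :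
    ∑ n ∈ Finset.range m, 1 / ((a - r ^ n) * (a - r ^ (-(n : ℤ)))) =
      m * (a ^ m + 1) / ((a - 1) * (a + 1) * (a ^ m - 1)) :=
  stmt4_general m r hr a ha ha'
end

section
/- Let m ≥ 1 and let a ∈ ℝ with a ≠ 0, a ≠ 1 and a ≠ −1. Then ∑_{n=0}^{m−1} X_n(a)·X_n(1/a) = m·(a−1)(a^m+1)/((a+1)(a^m−1)). -/
/-!
With `q = Q m` and `N k = (a q^k - q^{-k}) (a⁻¹ q^k - q^{-k})`, the `k`-th numerators of `X n a`
and `X n a⁻¹` multiply to `N k` and their `k`-th denominators to `N (k + 1)`, so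
`X n a * X n a⁻¹ = N 0 / N n` telescopes. As `w = q^{2n}` runs over the `m`-th roots of unity,
partial fractions give `N 0 / N n = (a - 1)/(a + 1) * (1/(1 - w a⁻¹) - 1/(1 - w a))`, and
`∑_{w^m = 1} 1/(1 - w y) = m/(1 - y^m)` (expand in a geometric series and use orthogonality of
the powers of a primitive root) evaluates both sums.
-/

open Finset

/-- `Q m = exp(πi/m)`. -/
noncomputable def Q (m : ℕ) : ℂ := Complex.exp (Real.pi * Complex.I / m)

/-- The Fateev–Zamolodchikov coefficients
`X_j(a) = ∏_{k=0}^{j-1} (a·Q^k − Q^{−k})/(Q^{k+1} − a·Q^{−k−1})`. -/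
noncomputable def X (m j : ℕ) (a : ℂ) : ℂ :=
  ∏ k ∈ Finset.range j,
    (a * Q m ^ k - Q m ^ (-(k : ℤ))) / (Q m ^ (k + 1) - a * Q m ^ (-((k : ℤ) + 1)))

lemma mul_ne_one_of_pow_ne_one {M : Type*} [CommMonoid M] {w y : M} {m : ℕ}
    (hw : w ^ m = 1) (hy : y ^ m ≠ 1) : w * y ≠ 1 :=
  fun h => hy (by rw [← one_pow m, ← h, mul_pow, hw, one_mul])

theorem IsPrimitiveRoot.sum_inv_one_sub_pow_mul {K : Type*} [Field K] {ζ y : K} {m : ℕ}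
    (hζ : IsPrimitiveRoot ζ m) (hy : y ^ m ≠ 1) :
    ∑ n ∈ range m, (1 - ζ ^ n * y)⁻¹ = m / (1 - y ^ m) := by
  have hym : 1 - y ^ m ≠ 0 := sub_ne_zero.mpr hy.symm
  have hgeom (n : ℕ) :
      (1 - ζ ^ n * y)⁻¹ = (∑ i ∈ range m, (ζ ^ i) ^ n * y ^ i) / (1 - y ^ m) := by
    have hζn : (ζ ^ n) ^ m = 1 := by rw [pow_right_comm, hζ.pow_eq_one, one_pow]
    have hne : 1 - ζ ^ n * y ≠ 0 := sub_ne_zero.mpr (mul_ne_one_of_pow_ne_one hζn hy).symm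
    have h := mul_neg_geom_sum (ζ ^ n * y) m
    rw [mul_pow, hζn, one_mul] at h
    rw [eq_div_iff hym, ← h, inv_mul_cancel_left₀ hne]
    exact sum_congr rfl fun i _ => by rw [mul_pow, pow_right_comm]
  have horth : ∀ i ∈ range m,
      ∑ n ∈ range m, (ζ ^ i) ^ n * y ^ i = if i = 0 then (m : K) else 0 := by
    intro i hi
    split_ifs with h0
    · simp [h0]
    · rw [← sum_mul, geom_sum_eq (hζ.pow_ne_one_of_pos_of_lt h0 (mem_range.mp hi)),
        pow_right_comm, hζ.pow_eq_one, one_pow, sub_self, zero_div, zero_mul]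
  rw [sum_congr rfl fun n _ => hgeom n, ← sum_div, sum_comm, sum_congr rfl horth, sum_ite_eq']
  split_ifs <;> simp_all

section

variable {K : Type*} [Field K]

def numeratorPair (q a : K) (k : ℕ) : K :=
  (a * q ^ k - q ^ (-(k : ℤ))) * (a⁻¹ * q ^ k - q ^ (-(k : ℤ)))

lemma numeratorPair_eq {q : K} (hq : q ≠ 0) (a : K) (k : ℕ) :
    numeratorPair q a k = ((q ^ 2) ^ k * a - 1) * ((q ^ 2) ^ k * a⁻¹ - 1) / (q ^ 2) ^ k := by
  rw [numeratorPair, zpow_neg, zpow_natCast]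
  field_simp
  ring

lemma numeratorPair_ne_zero {q a : K} (hq : q ≠ 0) {k : ℕ} (h₁ : (q ^ 2) ^ k * a ≠ 1)
    (h₂ : (q ^ 2) ^ k * a⁻¹ ≠ 1) : numeratorPair q a k ≠ 0 := by
  rw [numeratorPair_eq hq]
  exact div_ne_zero (mul_ne_zero (sub_ne_zero.mpr h₁) (sub_ne_zero.mpr h₂)) (by positivity)

lemma factor_mul_factor_inv {q a : K} (hq : q ≠ 0) (ha : a ≠ 0) (k : ℕ) :
    (a * q ^ k - q ^ (-(k : ℤ))) / (q ^ (k + 1) - a * q ^ (-((k : ℤ) + 1))) *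
      ((a⁻¹ * q ^ k - q ^ (-(k : ℤ))) / (q ^ (k + 1) - a⁻¹ * q ^ (-((k : ℤ) + 1)))) =
      numeratorPair q a k / numeratorPair q a (k + 1) := by
  rw [div_mul_div_comm, numeratorPair, numeratorPair]
  congr 1
  rw [show -((k : ℤ) + 1) = -((k + 1 : ℕ) : ℤ) by push_cast; ring, zpow_neg, zpow_natCast]
  field_simp

lemma numeratorPair_zero_div {q a : K} (hq : q ≠ 0) (ha : a ≠ 0) (ha' : a + 1 ≠ 0) {n : ℕ}
    (h₁ : (q ^ 2) ^ n * a ≠ 1) (h₂ : (q ^ 2) ^ n * a⁻¹ ≠ 1) :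
    numeratorPair q a 0 / numeratorPair q a n =
      (a - 1) / (a + 1) * ((1 - (q ^ 2) ^ n * a⁻¹)⁻¹ - (1 - (q ^ 2) ^ n * a)⁻¹) := by
  simp only [numeratorPair_eq hq, pow_zero, one_mul, div_one]
  generalize (q ^ 2) ^ n = w at *
  have h₁' : a * w ≠ 1 := by rwa [mul_comm]
  have h₂' : w ≠ a := fun h => h₂ (by rw [h, mul_inv_cancel₀ ha])
  have : 1 - a * w ≠ 0 := sub_ne_zero.mpr h₁'.symm
  have : a * w - 1 ≠ 0 := sub_ne_zero.mpr h₁'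
  have : w - a ≠ 0 := sub_ne_zero.mpr h₂'
  have : a - w ≠ 0 := sub_ne_zero.mpr h₂'.symm
  field_simp
  ring

end

lemma Q_ne_zero (m : ℕ) : Q m ≠ 0 := Complex.exp_ne_zero _

theorem Q_sq_isPrimitiveRoot {m : ℕ} (hm : m ≠ 0) : IsPrimitiveRoot (Q m ^ 2) m := by
  convert Complex.isPrimitiveRoot_exp m hm using 1
  rw [Q, ← Complex.exp_nat_mul]
  ring_nf

lemma X_mul_X_inv {m n : ℕ} {a : ℂ} (ha : a ≠ 0) (hN : ∀ k, numeratorPair (Q m) a k ≠ 0) :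
    X m n a * X m n a⁻¹ = numeratorPair (Q m) a 0 / numeratorPair (Q m) a n := by
  rw [X, X, ← prod_mul_distrib]
  simp only [factor_mul_factor_inv (Q_ne_zero m) ha]
  induction n with
  | zero => simp [div_self (hN 0)]
  | succ n ih => rw [prod_range_succ, ih, div_mul_div_cancel₀ (hN n)]

theorem sum_X_mul_X_inv {m : ℕ} (hm : m ≠ 0) {a : ℂ} (ha : a ≠ 0) (ha' : a + 1 ≠ 0)
    (ham : a ^ m ≠ 1) :
    ∑ n ∈ range m, X m n a * X m n a⁻¹ =
      m * (a - 1) * (a ^ m + 1) / ((a + 1) * (a ^ m - 1)) := by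
  have hζ := Q_sq_isPrimitiveRoot hm
  have ham' : a⁻¹ ^ m ≠ 1 := by rwa [inv_pow, inv_ne_one]
  have hζn (n : ℕ) : ((Q m ^ 2) ^ n) ^ m = 1 := by rw [pow_right_comm, hζ.pow_eq_one, one_pow]
  have h₁ (n : ℕ) := mul_ne_one_of_pow_ne_one (hζn n) ham
  have h₂ (n : ℕ) := mul_ne_one_of_pow_ne_one (hζn n) ham'
  have hN (k : ℕ) := numeratorPair_ne_zero (Q_ne_zero m) (h₁ k) (h₂ k)
  rw [sum_congr rfl fun n _ => by
      rw [X_mul_X_inv ha hN, numeratorPair_zero_div (Q_ne_zero m) ha ha' (h₁ n) (h₂ n)],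
    ← mul_sum, sum_sub_distrib, hζ.sum_inv_one_sub_pow_mul ham, hζ.sum_inv_one_sub_pow_mul ham',
    inv_pow]
  have ham₀ : a ^ m ≠ 0 := pow_ne_zero m ha
  generalize a ^ m = b at *
  have : b - 1 ≠ 0 := sub_ne_zero.mpr ham
  have : 1 - b ≠ 0 := sub_ne_zero.mpr ham.symm
  field_simp
  ring

theorem stmt5_general (m : ℕ) (a : ℝ) (ha0 : a ≠ 0) (ha1 : a ≠ 1) (ha2 : a ≠ -1) :
    ∑ n ∈ Finset.range m, X m n (a : ℂ) * X m n (1 / (a : ℂ)) =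
      (m : ℂ) * ((a : ℂ) - 1) * ((a : ℂ) ^ m + 1) / (((a : ℂ) + 1) * ((a : ℂ) ^ m - 1)) := by
  rcases eq_or_ne m 0 with rfl | hm
  · simp
  have ham : (a : ℂ) ^ m ≠ 1 := by
    norm_cast
    simp [pow_eq_one_iff_cases, hm, ha1, ha2]
  have ha' : (a : ℂ) + 1 ≠ 0 := by
    exact_mod_cast fun h => ha2 (eq_neg_of_add_eq_zero_left h)
  rw [one_div]
  exact sum_X_mul_X_inv hm (by exact_mod_cast ha0) ha' ham

/-- The diagonal unitarity sum:
`∑_{n=0}^{m−1} X_n(a)·X_n(1/a) = m·(a−1)(a^m+1)/((a+1)(a^m−1))` for real `a ≠ 0, ±1`. -/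
theorem stmt5 (m : ℕ) (hm : 1 ≤ m) (a : ℝ) (ha0 : a ≠ 0) (ha1 : a ≠ 1) (ha2 : a ≠ -1) :
    ∑ n ∈ Finset.range m, X m n (a : ℂ) * X m n (1 / (a : ℂ)) =
      (m : ℂ) * ((a : ℂ) - 1) * ((a : ℂ) ^ m + 1) / (((a : ℂ) + 1) * ((a : ℂ) ^ m - 1)) :=
  stmt5_general m a ha0 ha1 ha2
end

section
/- Let m ≥ 1 and set q = exp(πi(m−1)/m) ∈ ℂ. Let T be a square complex matrix (over a finite index type) that is unitary (Tᴴ·T = 1) and satisfies T^m = 1. Then the Gaussian operator S = (1/√m) · ∑_{j=0}^{m−1} q^{j²}·T^j is unitary: Sᴴ·S = 1. -/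
open Finset Matrix

/-- Unitarity of the Gaussian operator
`S = (1/√m) · ∑_{j=0}^{m−1} q^{j²}·T^j` with `q = exp(πi(m−1)/m)`,
for any unitary matrix `T` with `T^m = 1`. -/
theorem stmt10 (m : ℕ) (hm : 1 ≤ m) {n : Type*} [Fintype n] [DecidableEq n]
    (T : Matrix n n ℂ) (hT : Tᴴ * T = 1) (hTm : T ^ m = 1) :
    (((1 / Real.sqrt m : ℝ) : ℂ) •
          ∑ j ∈ Finset.range m,
            Complex.exp (Real.pi * Complex.I * (m - 1) / m) ^ (j ^ 2) • T ^ j)ᴴ *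
        (((1 / Real.sqrt m : ℝ) : ℂ) •
          ∑ j ∈ Finset.range m,
            Complex.exp (Real.pi * Complex.I * (m - 1) / m) ^ (j ^ 2) • T ^ j) = 1 := by
  set z : ℂ := Real.pi * Complex.I * (m - 1) / m with hz
  set q : ℂ := Complex.exp z with hqdef
  have hm0 : (m : ℂ) ≠ 0 := Nat.cast_ne_zero.mpr (by omega)
  have hstarz : (starRingEnd ℂ) z = -z := by
    rw [hz]
    simp [map_div₀, _root_.map_mul, Complex.conj_I, Complex.conj_ofReal]
    ring
  have hstarq : star q * q = 1 := by
    rw [hqdef, Complex.star_def, ← Complex.exp_conj, ← Complex.exp_add, hstarz,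
      neg_add_cancel, Complex.exp_zero]
  have hq2m : q ^ (2*m) = 1 := by
    rw [hqdef, ← Complex.exp_nat_mul]
    have h1 : ((2*m : ℕ) : ℂ) * z = ((m-1 : ℕ) : ℂ) * (2 * Real.pi * Complex.I) := by
      rw [hz]; push_cast [Nat.cast_sub (show 1 ≤ m from hm)]; field_simp
    rw [h1, Complex.exp_nat_mul, Complex.exp_two_pi_mul_I, one_pow]
  have hqm2 : q ^ (m^2) = 1 := by
    rw [hqdef, ← Complex.exp_nat_mul]
    have h1 : ((m^2 : ℕ) : ℂ) * z = ((m*(m-1) : ℕ) : ℂ) * (Real.pi * Complex.I) := by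
      rw [hz]; push_cast [Nat.cast_sub (show 1 ≤ m from hm)]; field_simp
    rw [h1, Complex.exp_nat_mul, Complex.exp_pi_mul_I]
    refine Even.neg_one_pow ?_
    have := Nat.even_mul_succ_self (m-1)
    rwa [show m - 1 + 1 = m from by omega, mul_comm] at this
  have hperiod : ∀ a t : ℕ, q ^ ((a + t*m)^2) = q ^ (a^2) := by
    intro a t
    have e : (a + t*m)^2 = a^2 + (2*m)*(a*t) + (m^2)*(t^2) := by ring
    rw [e, pow_add, pow_add, pow_mul q (2*m), pow_mul q (m^2), hq2m, hqm2, one_pow, one_pow,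
      mul_one, mul_one]
  have hqsqmod : ∀ a : ℕ, q ^ ((a % m)^2) = q ^ (a^2) := by
    intro a
    conv_rhs => rw [← Nat.mod_add_div' a m]
    exact (hperiod (a % m) (a / m)).symm
  have hprim : IsPrimitiveRoot (q^2) m := by
    have h1 : IsPrimitiveRoot (Complex.exp (2 * Real.pi * Complex.I / m)) m :=
      Complex.isPrimitiveRoot_exp m (by omega)
    have h2 : q^2 = Complex.exp (2 * Real.pi * Complex.I / m) ^ (m-1) := by
      rw [hqdef, ← Complex.exp_nat_mul, ← Complex.exp_nat_mul]
      congr 1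
      rw [hz]; push_cast [Nat.cast_sub (show 1 ≤ m from hm)]; field_simp
    have hcop : Nat.Coprime (m-1) m :=
      (Nat.coprime_self_sub_left hm).mpr (Nat.coprime_one_left m)
    rw [h2]
    exact h1.pow_of_coprime _ hcop
  have hgeom : ∀ l ∈ Finset.range m, (∑ j ∈ Finset.range m, ((q^2)^l)^j)
      = if l = 0 then (m:ℂ) else 0 := by
    intro l hl
    rw [Finset.mem_range] at hl
    rcases eq_or_ne l 0 with rfl | hl0
    · simp
    · rw [if_neg hl0]
      have hne : (q^2)^l ≠ 1 := by
        intro h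
        have hdvd : m ∣ l := (hprim.pow_eq_one_iff_dvd l).mp h
        have := Nat.le_of_dvd (by omega) hdvd
        omega
      have hpow : ((q^2)^l)^m = 1 := by
        rw [← pow_mul, mul_comm, pow_mul, hprim.pow_eq_one, one_pow]
      rw [geom_sum_eq hne, hpow, sub_self, zero_div]
  -- matrix facts
  have hTmod : ∀ a : ℕ, T ^ a = T ^ (a % m) := by
    intro a
    conv_lhs => rw [← Nat.mod_add_div' a m]
    rw [pow_add, pow_mul', hTm, one_pow, mul_one]
  have hTinv : Tᴴ = T ^ (m-1) := by
    have h1 : T * T ^ (m-1) = 1 := by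
      rw [← pow_succ', show m - 1 + 1 = m from by omega, hTm]
    calc Tᴴ = Tᴴ * (T * T ^ (m-1)) := by rw [h1, mul_one]
      _ = (Tᴴ * T) * T ^ (m-1) := by rw [mul_assoc]
      _ = T ^ (m-1) := by rw [hT, one_mul]
  have hsub : ∀ j : ℕ, j + (m-1)*j = m*j := by
    intro j
    obtain ⟨m', rfl⟩ : ∃ m', m = m' + 1 := ⟨m - 1, by omega⟩
    simp only [Nat.add_sub_cancel]
    ring
  have hAH : (∑ j ∈ Finset.range m, q ^ (j^2) • T ^ j)ᴴ
      = ∑ j ∈ Finset.range m, star (q ^ (j^2)) • T ^ ((m-1)*j) := by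
    rw [Matrix.conjTranspose_sum]
    refine Finset.sum_congr rfl fun j _ => ?_
    rw [Matrix.conjTranspose_smul, Matrix.conjTranspose_pow, hTinv, ← pow_mul]
  have hcoef : ∀ j l : ℕ, star (q ^ (j^2)) * q ^ (((j+l) % m)^2)
      = q ^ (l^2) * ((q^2)^l)^j := by
    intro j l
    rw [hqsqmod (j+l)]
    have e : (j+l)^2 = j^2 + (l^2 + 2*(j*l)) := by ring
    rw [e, pow_add, ← mul_assoc, star_pow, ← mul_pow, hstarq, one_pow, one_mul]
    rw [← pow_mul, ← pow_mul, pow_add]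
    ring
  have key : ∀ j ∈ Finset.range m,
      (∑ k ∈ Finset.range m, (star (q ^ (j^2)) * q ^ (k^2)) • T ^ ((m-1)*j + k))
      = ∑ l ∈ Finset.range m, (q ^ (l^2) * ((q^2)^l)^j) • T ^ l := by
    intro j hj
    refine Finset.sum_nbij' (fun k => (k + (m-1)*j) % m) (fun l => (j + l) % m)
      ?_ ?_ ?_ ?_ ?_
    · intro k hk
      exact Finset.mem_range.mpr (Nat.mod_lt _ (by omega))
    · intro l hl
      exact Finset.mem_range.mpr (Nat.mod_lt _ (by omega))
    · intro k hk
      rw [Finset.mem_range] at hk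
      show (j + (k + (m-1)*j) % m) % m = k
      rw [Nat.add_mod_mod, show j + (k + (m-1)*j) = k + m*j from by rw [← hsub j]; ring,
        Nat.add_mul_mod_self_left, Nat.mod_eq_of_lt hk]
    · intro l hl
      rw [Finset.mem_range] at hl
      show ((j + l) % m + (m-1)*j) % m = l
      rw [Nat.mod_add_mod, show j + l + (m-1)*j = l + m*j from by rw [← hsub j]; ring,
        Nat.add_mul_mod_self_left, Nat.mod_eq_of_lt hl]
    · intro k hk
      rw [Finset.mem_range] at hk
      have hlk : (j + (k + (m-1)*j) % m) % m = k := by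
        rw [Nat.add_mod_mod, show j + (k + (m-1)*j) = k + m*j from by rw [← hsub j]; ring,
          Nat.add_mul_mod_self_left, Nat.mod_eq_of_lt hk]
      have hT' : T ^ ((m-1)*j + k) = T ^ ((k + (m-1)*j) % m) := by
        rw [hTmod ((m-1)*j + k), Nat.add_comm ((m-1)*j) k]
      rw [hT']
      congr 1
      conv_lhs => rw [← hlk]
      exact hcoef j ((k + (m-1)*j) % m)
  have hmain : (∑ j ∈ Finset.range m, q ^ (j^2) • T ^ j)ᴴ * (∑ j ∈ Finset.range m, q ^ (j^2) • T ^ j)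
      = (m : ℂ) • (1 : Matrix n n ℂ) := by
    rw [hAH, Finset.sum_mul_sum]
    have e1 : ∀ j ∈ Finset.range m,
        (∑ k ∈ Finset.range m, (star (q^(j^2)) • T^((m-1)*j)) * (q^(k^2) • T^k))
        = ∑ l ∈ Finset.range m, (q^(l^2) * ((q^2)^l)^j) • T^l := by
      intro j hj
      rw [← key j hj]
      refine Finset.sum_congr rfl fun k _ => ?_
      rw [smul_mul_assoc, mul_smul_comm, smul_smul, ← pow_add]
    rw [Finset.sum_congr rfl e1, Finset.sum_comm]
    have e2 : ∀ l ∈ Finset.range m,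
        (∑ j ∈ Finset.range m, (q^(l^2) * ((q^2)^l)^j) • T^l)
        = if l = 0 then (m:ℂ) • T^0 else 0 := by
      intro l hl
      rw [← Finset.sum_smul, ← Finset.mul_sum, hgeom l hl]
      rcases eq_or_ne l 0 with rfl | h0
      · simp
      · simp [h0]
    rw [Finset.sum_congr rfl e2, Finset.sum_ite_eq' (Finset.range m) 0 (fun _ => (m:ℂ) • T^0)]
    simp [Finset.mem_range, show 0 < m from by omega]
  rw [Matrix.conjTranspose_smul, smul_mul_assoc, mul_smul_comm, hmain, smul_smul, smul_smul]
  have hc : star ((1 / Real.sqrt m : ℝ) : ℂ) * ((1 / Real.sqrt m : ℝ) : ℂ) * (m:ℂ) = 1 := by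
    rw [Complex.star_def, Complex.conj_ofReal, ← Complex.ofReal_mul]
    have h1 : (1 / Real.sqrt m) * (1 / Real.sqrt m) = 1 / m := by
      rw [div_mul_div_comm, one_mul, Real.mul_self_sqrt (by positivity)]
    rw [h1]
    push_cast
    field_simp
  rw [hc, one_smul]
end

section
/- Let m ≥ 1 and set q = exp(πi(m−1)/m) ∈ ℂ, so that q² is a primitive m-th root of unity. Let A, B be linear endomorphisms of a finite-dimensional complex vector space with A^m = Id, B^m = Id and A∘B = q²·(B∘A). Define S_A = (1/√m)·∑_{j=0}^{m−1} q^{j²}·A^j and S_B = (1/√m)·∑_{j=0}^{m−1} q^{j²}·B^j. Then the braid relation holds: S_A∘S_B∘S_A = S_B∘S_A∘S_B. -/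
open Finset

/-- The braid relation for the Gaussian operators
`S_C = (1/√m)·∑_{j=0}^{m−1} q^{j²}·C^j`, `q = exp(πi(m−1)/m)`,
built from endomorphisms `A, B` with `A^m = B^m = 1` and `AB = q²·BA`. -/
theorem stmt11 (m : ℕ) (hm : 1 ≤ m) {V : Type*} [AddCommGroup V] [Module ℂ V]
    [FiniteDimensional ℂ V] (q : ℂ) (hqdef : q = Complex.exp (Real.pi * Complex.I * (m - 1) / m))
    (A B : Module.End ℂ V) (hAm : A ^ m = 1) (hBm : B ^ m = 1)
    (hAB : A * B = q ^ 2 • (B * A))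
    (SA SB : Module.End ℂ V)
    (hSA : SA = ((1 / Real.sqrt m : ℝ) : ℂ) • ∑ j ∈ Finset.range m, q ^ (j ^ 2) • A ^ j)
    (hSB : SB = ((1 / Real.sqrt m : ℝ) : ℂ) • ∑ j ∈ Finset.range m, q ^ (j ^ 2) • B ^ j) :
    SA * SB * SA = SB * SA * SB := by
  haveI : NeZero m := ⟨by omega⟩
  have hm0 : (m : ℂ) ≠ 0 := Nat.cast_ne_zero.mpr (by omega)
  -- q^(2m) = 1
  have hq2m : q ^ (2 * m) = 1 := by
    rw [hqdef, ← Complex.exp_nat_mul]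
    rw [show ((2 * m : ℕ) : ℂ) * (Real.pi * Complex.I * ((m : ℂ) - 1) / m)
        = (((m : ℤ) - 1 : ℤ) : ℂ) * (2 * Real.pi * Complex.I) by
      push_cast; field_simp]
    exact Complex.exp_int_mul_two_pi_mul_I _
  -- q^(m*m) = 1
  have hqm2 : q ^ (m * m) = 1 := by
    rw [hqdef, ← Complex.exp_nat_mul]
    rw [show ((m * m : ℕ) : ℂ) * (Real.pi * Complex.I * ((m : ℂ) - 1) / m)
        = ((m * (m - 1) : ℕ) : ℂ) * (Real.pi * Complex.I) by
      push_cast [Nat.cast_sub hm]; field_simp]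
    rw [Complex.exp_nat_mul, Complex.exp_pi_mul_I]
    refine Even.neg_one_pow ?_
    rcases Nat.even_or_odd m with h | h
    · exact Nat.even_mul.mpr (Or.inl h)
    · exact Nat.even_mul.mpr (Or.inr (Nat.Odd.sub_odd h odd_one))
  -- periodicity lemmas
  have hsq : ∀ n : ℕ, q ^ (n ^ 2) = q ^ ((n % m) ^ 2) := by
    intro n
    have hn : n ^ 2 = (n % m) ^ 2 + (m * m) * ((n / m) * (n / m))
        + (2 * m) * ((n / m) * (n % m)) := by
      conv_lhs => rw [← Nat.div_add_mod n m]
      ring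
    rw [hn, pow_add, pow_add, pow_mul q (m * m), pow_mul q (2 * m), hqm2, hq2m,
      one_pow, one_pow, mul_one, mul_one]
  have hsq' : ∀ n₁ n₂ : ℕ, n₁ % m = n₂ % m → q ^ (n₁ ^ 2) = q ^ (n₂ ^ 2) := by
    intro n₁ n₂ h
    rw [hsq n₁, hsq n₂, h]
  have hcr : ∀ u v : ℕ, q ^ (2 * (u * v)) = q ^ (2 * ((u % m) * (v % m))) := by
    intro u v
    have hn : 2 * (u * v) = 2 * ((u % m) * (v % m))
        + (2 * m) * (m * ((u / m) * (v / m)) + (u / m) * (v % m) + (u % m) * (v / m)) := by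
      conv_lhs => rw [← Nat.div_add_mod u m, ← Nat.div_add_mod v m]
      ring
    rw [hn, pow_add, pow_mul q (2 * m), hq2m, one_pow, mul_one]
  have hcr' : ∀ u₁ v₁ u₂ v₂ : ℕ, u₁ % m = u₂ % m → v₁ % m = v₂ % m →
      q ^ (2 * (u₁ * v₁)) = q ^ (2 * (u₂ * v₂)) := by
    intro u₁ v₁ u₂ v₂ h1 h2
    rw [hcr u₁ v₁, hcr u₂ v₂, h1, h2]
  have hAmod : ∀ n : ℕ, A ^ n = A ^ (n % m) := by
    intro n
    conv_lhs => rw [← Nat.div_add_mod n m]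
    rw [pow_add, pow_mul, hAm, one_pow, one_mul]
  have hBmod : ∀ n : ℕ, B ^ n = B ^ (n % m) := by
    intro n
    conv_lhs => rw [← Nat.div_add_mod n m]
    rw [pow_add, pow_mul, hBm, one_pow, one_mul]
  -- commutation
  have h1 : ∀ b : ℕ, A * B ^ b = (q ^ 2) ^ b • (B ^ b * A) := by
    intro b
    induction b with
    | zero => simp
    | succ n ih =>
      calc A * B ^ (n + 1) = (A * B ^ n) * B := by rw [pow_succ, mul_assoc]
        _ = ((q ^ 2) ^ n • (B ^ n * A)) * B := by rw [ih]
        _ = (q ^ 2) ^ n • (B ^ n * (A * B)) := by rw [smul_mul_assoc, mul_assoc]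
        _ = (q ^ 2) ^ n • (B ^ n * (q ^ 2 • (B * A))) := by rw [hAB]
        _ = (q ^ 2) ^ (n + 1) • (B ^ (n + 1) * A) := by
            rw [mul_smul_comm, smul_smul, ← pow_succ, ← mul_assoc, ← pow_succ]
  have hcomm : ∀ a b : ℕ, A ^ a * B ^ b = q ^ (2 * (a * b)) • (B ^ b * A ^ a) := by
    have key : ∀ a b : ℕ, A ^ a * B ^ b = (q ^ 2) ^ (a * b) • (B ^ b * A ^ a) := by
      intro a b
      induction a with
      | zero => simp
      | succ n ih =>
        calc A ^ (n + 1) * B ^ b = A ^ n * (A * B ^ b) := by rw [pow_succ, mul_assoc]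
          _ = A ^ n * ((q ^ 2) ^ b • (B ^ b * A)) := by rw [h1]
          _ = (q ^ 2) ^ b • ((A ^ n * B ^ b) * A) := by rw [mul_smul_comm, mul_assoc]
          _ = (q ^ 2) ^ b • (((q ^ 2) ^ (n * b) • (B ^ b * A ^ n)) * A) := by rw [ih]
          _ = ((q ^ 2) ^ b * (q ^ 2) ^ (n * b)) • (B ^ b * (A ^ n * A)) := by
              rw [smul_mul_assoc, smul_smul, mul_assoc]
          _ = (q ^ 2) ^ ((n + 1) * b) • (B ^ b * A ^ (n + 1)) := by
              rw [← pow_add, ← pow_succ]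
              congr 2
              ring
    intro a b
    rw [key a b, ← pow_mul]
  -- term lemmas
  have hL : ∀ a b c : ℕ, (q ^ (a ^ 2) • A ^ a) * (q ^ (b ^ 2) • B ^ b) * (q ^ (c ^ 2) • A ^ c)
      = q ^ (a ^ 2 + b ^ 2 + c ^ 2 + 2 * (a * b)) • (B ^ b * A ^ (a + c)) := by
    intro a b c
    simp only [smul_mul_assoc, mul_smul_comm, smul_smul]
    rw [hcomm a b, smul_mul_assoc, mul_assoc, ← pow_add, smul_smul]
    congr 1
    · simp only [← pow_add]; congr 1; ring
    · rw [← pow_add]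
  have hR : ∀ a b c : ℕ, (q ^ (a ^ 2) • B ^ a) * (q ^ (b ^ 2) • A ^ b) * (q ^ (c ^ 2) • B ^ c)
      = q ^ (a ^ 2 + b ^ 2 + c ^ 2 + 2 * (b * c)) • (B ^ (a + c) * A ^ b) := by
    intro a b c
    simp only [smul_mul_assoc, mul_smul_comm, smul_smul]
    rw [mul_assoc, hcomm b c, mul_smul_comm, ← mul_assoc, ← pow_add, smul_smul]
    congr 1
    · simp only [← pow_add]; congr 1; ring
    · rw [← mul_assoc, ← pow_add]
  -- reduce to the sum identity
  suffices h : (∑ j ∈ Finset.range m, q ^ (j ^ 2) • A ^ j) *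
      (∑ j ∈ Finset.range m, q ^ (j ^ 2) • B ^ j) *
      (∑ j ∈ Finset.range m, q ^ (j ^ 2) • A ^ j)
      = (∑ j ∈ Finset.range m, q ^ (j ^ 2) • B ^ j) *
      (∑ j ∈ Finset.range m, q ^ (j ^ 2) • A ^ j) *
      (∑ j ∈ Finset.range m, q ^ (j ^ 2) • B ^ j) by
    rw [hSA, hSB]
    simp only [smul_mul_assoc, mul_smul_comm]
    rw [h]
  simp only [Finset.sum_mul, Finset.mul_sum]
  simp only [hL, hR]
  -- convert range sums to ZMod sums
  have hconv : ∀ f : ℕ → Module.End ℂ V,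
      (∑ j ∈ Finset.range m, f j) = ∑ x : ZMod m, f x.val := by
    intro f
    refine Finset.sum_nbij' (fun j => (j : ZMod m)) (fun x => x.val) ?_ ?_ ?_ ?_ ?_
    · intro a _; exact Finset.mem_univ _
    · intro x _; exact Finset.mem_range.mpr (ZMod.val_lt x)
    · intro a ha; exact ZMod.val_cast_of_lt (Finset.mem_range.mp ha)
    · intro x _; exact ZMod.natCast_rightInverse x
    · intro a ha; rw [ZMod.val_cast_of_lt (Finset.mem_range.mp ha)]
  have hconv3 : ∀ F : ℕ → ℕ → ℕ → Module.End ℂ V,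
      (∑ x ∈ Finset.range m, ∑ y ∈ Finset.range m, ∑ z ∈ Finset.range m, F x y z)
      = ∑ p : ZMod m × ZMod m × ZMod m, F p.1.val p.2.1.val p.2.2.val := by
    intro F
    rw [Fintype.sum_prod_type]
    rw [hconv (fun x => ∑ y ∈ Finset.range m, ∑ z ∈ Finset.range m, F x y z)]
    refine Finset.sum_congr rfl fun x _ => ?_
    rw [Fintype.sum_prod_type]
    rw [hconv (fun y => ∑ z ∈ Finset.range m, F x.val y z)]
    refine Finset.sum_congr rfl fun y _ => ?_
    exact hconv _
  rw [hconv3, hconv3]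
  refine Fintype.sum_equiv
    (⟨fun p => (-p.2.2, p.2.2 + p.1, p.2.2 + p.2.1),
      fun p => (p.2.1 + p.1, p.2.2 + p.1, -p.1),
      fun p => by
        obtain ⟨u, v, w⟩ := p
        simp only [Prod.mk.injEq]
        refine ⟨by ring, by ring, by ring⟩,
      fun p => by
        obtain ⟨u, v, w⟩ := p
        simp only [Prod.mk.injEq]
        refine ⟨by ring, by ring, by ring⟩⟩ :
      (ZMod m × ZMod m × ZMod m) ≃ (ZMod m × ZMod m × ZMod m)) _ _ ?_
  rintro ⟨c, b, a⟩
  simp only [Equiv.coe_fn_mk]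
  -- pointwise equality
  have hmm : ∀ k : ℕ, k % m % m = k % m := fun k => Nat.mod_mod_of_dvd k dvd_rfl
  have hvadd : ∀ x y : ZMod m, (x + y).val % m = (x.val + y.val) % m := by
    intro x y; rw [ZMod.val_add, hmm]
  have hval0 : ((-a).val + a.val) % m = 0 := by
    rw [← ZMod.val_add, neg_add_cancel, ZMod.val_zero]
  -- operator parts
  have hBop : B ^ ((a + b).val + (-a).val) = B ^ b.val := by
    rw [hBmod, ← ZMod.val_add, show a + b + -a = b from by ring]
  have hAop : A ^ (a.val + c.val) = A ^ ((a + c).val) := by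
    rw [hAmod, ← ZMod.val_add]
  -- scalar part
  have hscal : q ^ ((a + b).val ^ 2 + (a + c).val ^ 2 + (-a).val ^ 2
        + 2 * ((a + c).val * (-a).val))
      = q ^ (a.val ^ 2 + b.val ^ 2 + c.val ^ 2 + 2 * (a.val * b.val)) := by
    have e1 : q ^ ((a + b).val ^ 2) = q ^ ((a.val + b.val) ^ 2) :=
      hsq' _ _ (hvadd a b)
    have e2 : q ^ ((a + c).val ^ 2) = q ^ ((a.val + c.val) ^ 2) :=
      hsq' _ _ (hvadd a c)
    have e3 : q ^ (2 * ((a + c).val * (-a).val))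
        = q ^ (2 * ((a.val + c.val) * (-a).val)) :=
      hcr' _ _ _ _ (hvadd a c) rfl
    have e4 : ((a.val + c.val) + (-a).val) % m = c.val % m := by
      rw [show a.val + c.val + (-a).val = c.val + ((-a).val + a.val) from by ring,
        Nat.add_mod, hval0, Nat.add_zero, hmm]
    calc q ^ ((a + b).val ^ 2 + (a + c).val ^ 2 + (-a).val ^ 2
          + 2 * ((a + c).val * (-a).val))
        = q ^ ((a + b).val ^ 2) * q ^ ((a + c).val ^ 2) * q ^ ((-a).val ^ 2)
          * q ^ (2 * ((a + c).val * (-a).val)) := by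
          rw [← pow_add, ← pow_add, ← pow_add]
      _ = q ^ ((a.val + b.val) ^ 2) * (q ^ ((a.val + c.val) ^ 2) * q ^ ((-a).val ^ 2)
          * q ^ (2 * ((a.val + c.val) * (-a).val))) := by
          rw [e1, e2, e3]; ring
      _ = q ^ ((a.val + b.val) ^ 2) * q ^ (((a.val + c.val) + (-a).val) ^ 2) := by
          rw [← pow_add, ← pow_add,
            show (a.val + c.val) ^ 2 + (-a).val ^ 2 + 2 * ((a.val + c.val) * (-a).val)
              = ((a.val + c.val) + (-a).val) ^ 2 from by ring]
      _ = q ^ ((a.val + b.val) ^ 2) * q ^ (c.val ^ 2) := by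
          rw [hsq' _ _ e4]
      _ = q ^ (a.val ^ 2 + b.val ^ 2 + c.val ^ 2 + 2 * (a.val * b.val)) := by
          rw [← pow_add]
          congr 1
          ring
  rw [hBop, hAop, hscal]
end

section
/- Let m ≥ 1, N ≥ 2 and let q ∈ ℂ with q ≠ 0. Then T^m = q^{−m(m−1)(N−2)/2}·Id, where Id is the identity matrix indexed by functions Fin N → ZMod m. -/
open Finset Matrix

/-- The matrix `T = σx ⊗ σy^{⊗(N−1)}` on `(ℂ^m)^{⊗N}`, with rows and columns
indexed by functions `v : Fin N → ZMod m`: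
`T(v,w) = q^{ŵ(0) − ∑_{i=1}^{N−1} ŵ(i)}` if `v(i) = w(i) − 1` for all `i`, else `0`. -/
noncomputable def Tmat (m N : ℕ) (q : ℂ) :
    Matrix (Fin N → ZMod m) (Fin N → ZMod m) ℂ :=
  fun v w =>
    if ∀ i, v i = w i - 1 then
      q ^ (∑ i : Fin N, if (i : ℕ) = 0 then ((w i).val : ℤ) else -((w i).val : ℤ))
    else 0

noncomputable def Ee (m N : ℕ) (w : Fin N → ZMod m) : ℤ :=
  ∑ i : Fin N, if (i : ℕ) = 0 then ((w i).val : ℤ) else -((w i).val : ℤ)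

lemma Tmat_apply (m N : ℕ) (q : ℂ) (v w : Fin N → ZMod m) :
    Tmat m N q v w = if w = fun i => v i + 1 then q ^ Ee m N w else 0 := by
  have h : (∀ i, v i = w i - 1) ↔ w = fun i => v i + 1 := by
    simp [funext_iff, eq_sub_iff_add_eq, eq_comm]
  simp [Tmat, Ee, h]

lemma Tmat_pow (m N : ℕ) [NeZero m] (q : ℂ) (hq0 : q ≠ 0) (k : ℕ) (v w : Fin N → ZMod m) :
    (Tmat m N q ^ k : Matrix (Fin N → ZMod m) (Fin N → ZMod m) ℂ) v w =
      if w = fun i => v i + (k : ZMod m) then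
        q ^ (∑ j ∈ Finset.range k, Ee m N (fun i => v i + ((j : ZMod m) + 1))) else 0 := by
  induction k generalizing w with
  | zero => simp [Matrix.one_apply, funext_iff, eq_comm]
  | succ k ih =>
    rw [pow_succ, Matrix.mul_apply]
    simp only [ih, Tmat_apply, ite_mul, zero_mul]
    rw [Finset.sum_ite_eq' Finset.univ (fun i => v i + (k : ZMod m))]
    simp only [Finset.mem_univ, if_true]
    have hc : (w = fun i => (v i + (k : ZMod m)) + 1) ↔
        (w = fun i => v i + ((k + 1 : ℕ) : ZMod m)) := by
      push_cast
      simp [add_assoc]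
    by_cases hw : w = fun i => v i + ((k + 1 : ℕ) : ZMod m)
    · rw [if_pos (hc.mpr hw), if_pos hw, Finset.sum_range_succ, zpow_add₀ hq0]
      have : (fun i => v i + ((k + 1 : ℕ) : ZMod m)) = fun i => v i + ((k : ZMod m) + 1) := by
        funext i; push_cast; ring
      rw [hw, this]
    · rw [if_neg (fun h => hw (hc.mp h)), if_neg hw, mul_zero]

lemma sum_range_zmod (m : ℕ) [NeZero m] (F : ZMod m → ℤ) :
    ∑ j ∈ Finset.range m, F (j : ZMod m) = ∑ c : ZMod m, F c := by
  have hb : Function.Bijective (fun j : Fin m => ((j : ℕ) : ZMod m)) := by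
    refine (Fintype.bijective_iff_injective_and_card _).mpr ⟨?_, by simp [ZMod.card]⟩
    intro a b hab
    have := congrArg ZMod.val hab
    simpa [ZMod.val_natCast_of_lt a.isLt, ZMod.val_natCast_of_lt b.isLt, Fin.val_injective.eq_iff] using this
  rw [← Fin.sum_univ_eq_sum_range (fun j => F ((j : ℕ) : ZMod m)) m]
  exact Fintype.sum_bijective _ hb _ F (fun j => rfl)

lemma sum_val_int (m : ℕ) [NeZero m] :
    ∑ c : ZMod m, ((c.val : ℤ)) = ((m * (m - 1) / 2 : ℕ) : ℤ) := by
  rw [← sum_range_zmod m (fun c => (c.val : ℤ))]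
  have : ∀ j ∈ Finset.range m, (((j : ZMod m).val : ℤ)) = (j : ℤ) := by
    intro j hj
    rw [ZMod.val_natCast_of_lt (Finset.mem_range.mp hj)]
  rw [Finset.sum_congr rfl this]
  rw [← Nat.cast_sum]
  norm_cast
  exact Finset.sum_range_id m

lemma sum_shift_val (m : ℕ) [NeZero m] (a : ZMod m) :
    ∑ c : ZMod m, (((a + c).val : ℤ)) = ((m * (m - 1) / 2 : ℕ) : ℤ) := by
  rw [← sum_val_int m]
  exact Fintype.sum_equiv (Equiv.addLeft a) _ _ (fun c => rfl)

/-- `T^m = q^{−m(m−1)(N−2)/2}·Id` for `q ≠ 0` and `N ≥ 2`.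
(The instance `[NeZero m]` encodes the hypothesis `m ≥ 1`.) -/
theorem stmt14 (m N : ℕ) [NeZero m] (hN : 2 ≤ N) (q : ℂ) (hq0 : q ≠ 0) :
    Tmat m N q ^ m =
      q ^ (-((m * (m - 1) * (N - 2) / 2 : ℕ) : ℤ)) •
        (1 : Matrix (Fin N → ZMod m) (Fin N → ZMod m) ℂ) := by
  obtain ⟨n, rfl⟩ : ∃ n, N = n + 2 := ⟨N - 2, by omega⟩
  ext v w
  rw [Tmat_pow m (n + 2) q hq0 m v w]
  have hm0 : ((m : ZMod m)) = 0 := ZMod.natCast_self m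
  have hcond : (w = fun i => v i + (m : ZMod m)) ↔ w = v := by
    simp [hm0, funext_iff, eq_comm]
  -- compute the exponent
  have hexp : (∑ j ∈ Finset.range m, Ee m (n + 2) (fun i => v i + ((j : ZMod m) + 1)))
      = -((m * (m - 1) * n / 2 : ℕ) : ℤ) := by
    rw [sum_range_zmod m (fun c => Ee m (n + 2) (fun i => v i + (c + 1)))]
    have h1 : (∑ c : ZMod m, Ee m (n + 2) (fun i => v i + (c + 1)))
        = ∑ c : ZMod m, Ee m (n + 2) (fun i => v i + c) :=
      Fintype.sum_equiv (Equiv.addRight 1) _ _ (fun c => rfl)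
    rw [h1]
    unfold Ee
    rw [Finset.sum_comm]
    set M : ℤ := ((m * (m - 1) / 2 : ℕ) : ℤ) with hM
    have key : ∀ i : Fin (n + 2),
        (∑ c : ZMod m, if (i : ℕ) = 0 then (((v i + c).val : ℤ)) else -(((v i + c).val : ℤ)))
        = if (i : ℕ) = 0 then M else -M := by
      intro i
      by_cases h : (i : ℕ) = 0
      · simp only [if_pos h]
        exact sum_shift_val m (v i)
      · simp only [if_neg h]
        rw [Finset.sum_neg_distrib, sum_shift_val m (v i)]
    rw [Finset.sum_congr rfl (fun i _ => key i)]
    rw [Fin.sum_univ_succ]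
    have h2 : ∀ i : Fin (n + 1), (if ((Fin.succ i : Fin (n + 2)) : ℕ) = 0 then M else -M) = -M := by
      intro i
      simp [Fin.val_succ]
    rw [Finset.sum_congr rfl (fun i _ => h2 i), Finset.sum_const, Finset.card_univ,
      Fintype.card_fin, if_pos (Fin.val_zero _)]
    obtain ⟨t, ht⟩ : ∃ t, m * (m - 1) = 2 * t := by
      rcases Nat.even_or_odd m with he | ho
      · obtain ⟨s, hs⟩ := he
        exact ⟨s * (m - 1), by subst hs; ring⟩
      · obtain ⟨s, hs⟩ := ho
        refine ⟨(2 * s + 1) * s, ?_⟩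
        subst hs
        have h1 : 2 * s + 1 - 1 = 2 * s := by omega
        rw [h1]; ring
    have hd1 : m * (m - 1) / 2 = t := by omega
    have hd2 : m * (m - 1) * n / 2 = t * n := by
      rw [ht, mul_assoc]; omega
    rw [hM, hd1, hd2, nsmul_eq_mul]
    push_cast
    ring
  rw [hexp]
  by_cases hvw : w = v
  · rw [if_pos (hcond.mpr hvw)]
    subst hvw
    simp [Matrix.one_apply, Matrix.smul_apply]
  · rw [if_neg (fun h => hvw (hcond.mp h))]
    simp [Matrix.one_apply, Matrix.smul_apply, Ne.symm hvw, hvw]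
end

section
/- Let m ≥ 1, N ≥ 2, 1 ≤ z ≤ N−1, and let q ∈ ℂ with q ≠ 0 and q^{2m} = 1. On the index set of functions Fin (N+z) → ZMod m, define matrices A and B by: A(v,w) = T(v∘ι, w∘ι) if v(p) = w(p) for all N ≤ p < N+z, and 0 otherwise, where ι : Fin N → Fin (N+z) is the inclusion of the first N coordinates; B(v,w) = T(v∘ι', w∘ι') if v(p) = w(p) for all 0 ≤ p < z, and 0 otherwise, where ι' : Fin N → Fin (N+z) is the inclusion p ↦ p+z of the last N coordinates. Then A·B = q²·(B·A). -/
/-!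
`A` and `B` are monomial matrices: row `v` of `A` has its only nonzero entry in column
`v + χ`, where `χ` is the indicator of the first `N` coordinates, with weight `q ^ E`
for the exponent `E` of `T`; likewise `B`, with the last `N` coordinates. The two shifts
commute, so `A·B` and `B·A` are monomial for the same permutation, and the claim becomes
an identity between exponents. Computed coordinate by coordinate, the exponents of the
two products differ only on the overlap `[z, N)`, and there only at coordinate `z`, where
`T`'s sign `+1` in `B` meets the sign `-1` in `A`. The difference is `2 (val (a + 1) - val a)`,
which is `2` modulo `2m`.
-/

open Finset Matrix

/-- The inclusion `ι : Fin N → Fin (N+z)` of the first `N` coordinates. -/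
def iota (N z : ℕ) : Fin N → Fin (N + z) := Fin.castAdd z

/-- The inclusion `ι' : Fin N → Fin (N+z)`, `p ↦ p + z`, of the last `N` coordinates. -/
def iota' (N z : ℕ) : Fin N → Fin (N + z) :=
  fun p => ⟨(p : ℕ) + z, by have := p.isLt; omega⟩

/-- `A` acts by `T` on the first `N` tensor factors, identically on the rest. -/
noncomputable def Amat (m N z : ℕ) (q : ℂ) :
    Matrix (Fin (N + z) → ZMod m) (Fin (N + z) → ZMod m) ℂ :=
  fun v w =>
    if ∀ p : Fin (N + z), N ≤ (p : ℕ) → v p = w p then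
      Tmat m N q (v ∘ iota N z) (w ∘ iota N z)
    else 0

/-- `B` acts by `T` on the last `N` tensor factors, identically on the rest. -/
noncomputable def Bmat (m N z : ℕ) (q : ℂ) :
    Matrix (Fin (N + z) → ZMod m) (Fin (N + z) → ZMod m) ℂ :=
  fun v w =>
    if ∀ p : Fin (N + z), (p : ℕ) < z → v p = w p then
      Tmat m N q (v ∘ iota' N z) (w ∘ iota' N z)
    else 0

section MonomialMatrix

variable {ι R : Type*} [DecidableEq ι]

def monomialMatrix [Zero R] (σ : ι → ι) (f : ι → R) : Matrix ι ι R :=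
  fun v w => if w = σ v then f v else 0

theorem monomialMatrix_mul [Fintype ι] [NonUnitalNonAssocSemiring R] (σ τ : ι → ι) (f g : ι → R) :
    monomialMatrix σ f * monomialMatrix τ g = monomialMatrix (τ ∘ σ) (fun v => f v * g (σ v)) := by
  ext v u
  rw [Matrix.mul_apply, Finset.sum_eq_single (σ v)]
  · simp [monomialMatrix]
  · intro w _ hw
    simp [monomialMatrix, hw]
  · simp

theorem smul_monomialMatrix {S : Type*} [Zero R] [SMulZeroClass S R] (c : S) (σ : ι → ι)
    (f : ι → R) : c • monomialMatrix σ f = monomialMatrix σ (c • f) := by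
  ext v w
  simp [monomialMatrix]

end MonomialMatrix

theorem zpow_two_mul_val_add_one_sub_val {G₀ : Type*} [GroupWithZero G₀] {m : ℕ} [NeZero m]
    {q : G₀} (hq0 : q ≠ 0) (hq : q ^ (2 * m) = 1) (a : ZMod m) :
    q ^ (2 * (((a + 1).val : ℤ) - a.val)) = q ^ 2 := by
  obtain ⟨t, ht⟩ : (m : ℤ) ∣ (((a + 1).val : ℤ) - a.val) - 1 := by
    rw [← ZMod.intCast_eq_intCast_iff_dvd_sub]
    push_cast
    simp
  rw [show 2 * (((a + 1).val : ℤ) - a.val) = 2 + ((2 * m : ℕ) : ℤ) * t by push_cast; linarith,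
    zpow_add₀ hq0, _root_.zpow_mul, zpow_natCast, hq, _root_.one_zpow, mul_one, zpow_ofNat]

theorem ite_monomialMatrix_comp {κ ι G R : Type*} [AddGroupWithOne G] [Zero R]
    [DecidableEq (κ → G)] [DecidableEq (ι → G)] (e : κ → ι) (P : ι → Prop)
    (hP : ∀ p, P p ↔ p ∉ Set.range e) (g : (κ → G) → R) (v w : ι → G)
    [Decidable (∀ p, P p → v p = w p)] :
    (if ∀ p, P p → v p = w p then monomialMatrix (· + 1) g (v ∘ e) (w ∘ e) else 0) =
      monomialMatrix (· + (Set.range e).indicator 1) (fun v => g (v ∘ e)) v w := by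
  have key : w = v + (Set.range e).indicator 1 ↔ (∀ p, P p → v p = w p) ∧ w ∘ e = v ∘ e + 1 := by
    constructor
    · rintro rfl
      refine ⟨fun p hp => ?_, funext fun i => ?_⟩
      · simp [Set.indicator_of_notMem ((hP p).1 hp)]
      · simp
    · rintro ⟨hout, hin⟩
      funext p
      by_cases hp : p ∈ Set.range e
      · obtain ⟨i, rfl⟩ := hp
        simpa [Set.indicator_of_mem (Set.mem_range_self i)] using congrFun hin i
      · simp [Set.indicator_of_notMem hp, hout p ((hP p).2 hp)]
  simp only [monomialMatrix, key, ite_and]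

def tExponent {m N : ℕ} (x : Fin N → ZMod m) : ℤ :=
  ∑ i : Fin N, if (i : ℕ) = 0 then ((x i).val : ℤ) else -((x i).val : ℤ)

theorem Tmat_eq_monomialMatrix (m N : ℕ) (q : ℂ) :
    Tmat m N q = monomialMatrix (· + 1) (fun x => q ^ tExponent (x + 1)) := by
  ext v w
  have hvw : (∀ i, v i = w i - 1) ↔ w = v + 1 := by
    simp only [funext_iff, Pi.add_apply, Pi.one_apply, eq_sub_iff_add_eq, eq_comm]
  by_cases h : w = v + 1
  · simp [Tmat, monomialMatrix, tExponent, h]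
  · simp [Tmat, monomialMatrix, hvw, h]

theorem mem_range_iota {N z : ℕ} (p : Fin (N + z)) : p ∈ Set.range (iota N z) ↔ (p : ℕ) < N :=
  ⟨fun ⟨i, hi⟩ => hi ▸ i.isLt, fun hp => ⟨⟨p, hp⟩, rfl⟩⟩

theorem mem_range_iota' {N z : ℕ} (p : Fin (N + z)) : p ∈ Set.range (iota' N z) ↔ z ≤ (p : ℕ) :=
  ⟨fun ⟨i, hi⟩ => hi ▸ Nat.le_add_left z i,
    fun hp => ⟨⟨p - z, by omega⟩, Fin.ext (by simp [iota']; omega)⟩⟩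

theorem Amat_eq_monomialMatrix (m N z : ℕ) (q : ℂ) :
    Amat m N z q = monomialMatrix (· + (Set.range (iota N z)).indicator 1)
      (fun v => q ^ tExponent (v ∘ iota N z + 1)) := by
  ext v w
  rw [Amat, Tmat_eq_monomialMatrix]
  exact ite_monomialMatrix_comp _ _ (fun p => by rw [mem_range_iota]; omega) _ v w

theorem Bmat_eq_monomialMatrix (m N z : ℕ) (q : ℂ) :
    Bmat m N z q = monomialMatrix (· + (Set.range (iota' N z)).indicator 1)
      (fun v => q ^ tExponent (v ∘ iota' N z + 1)) := by
  ext v w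
  rw [Bmat, Tmat_eq_monomialMatrix]
  exact ite_monomialMatrix_comp _ _ (fun p => by rw [mem_range_iota']; omega) _ v w

def iotaCoeff (N z : ℕ) (p : Fin (N + z)) : ℤ :=
  if (p : ℕ) < N then (if (p : ℕ) = 0 then 1 else -1) else 0

def iota'Coeff (N z : ℕ) (p : Fin (N + z)) : ℤ :=
  if z ≤ (p : ℕ) then (if (p : ℕ) = z then 1 else -1) else 0

theorem tExponent_comp_iota {m N z : ℕ} (x : Fin (N + z) → ZMod m) :
    tExponent (x ∘ iota N z) = ∑ p, iotaCoeff N z p * (x p).val := by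
  refine Fintype.sum_of_injective (iota N z) (Fin.castAdd_injective N z) _ _
    (fun p hp => ?_) (fun i => ?_)
  · simp [iotaCoeff, (mem_range_iota p).not.1 hp]
  · simp only [iotaCoeff, iota, Fin.val_castAdd, i.isLt, if_true, Function.comp_apply]
    split_ifs with h <;> simp [h]

theorem tExponent_comp_iota' {m N z : ℕ} (x : Fin (N + z) → ZMod m) :
    tExponent (x ∘ iota' N z) = ∑ p, iota'Coeff N z p * (x p).val := by
  refine Fintype.sum_of_injective (iota' N z)
    (fun i j h => Fin.ext (by simpa [iota'] using congrArg Fin.val h)) _ _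
    (fun p hp => ?_) (fun i => ?_)
  · simp [iota'Coeff, (mem_range_iota' p).not.1 hp]
  · simp only [iota'Coeff, iota', Nat.le_add_left, if_true, Function.comp_apply,
      Nat.add_eq_right]
    split_ifs with h <;> simp [h]

theorem coeff_mul_val_shift {m N z : ℕ} (hz1 : 1 ≤ z) (hzN : z < N) (v : Fin (N + z) → ZMod m)
    (p : Fin (N + z)) :
    iotaCoeff N z p * (v p + 1).val +
        iota'Coeff N z p * (v p + (Set.range (iota N z)).indicator 1 p + 1).val =
      (if p = ⟨z, by omega⟩ then
          2 * (((v ⟨z, by omega⟩ + 1 + 1).val : ℤ) - (v ⟨z, by omega⟩ + 1).val) else 0) +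
        (iota'Coeff N z p * (v p + 1).val +
          iotaCoeff N z p * (v p + (Set.range (iota' N z)).indicator 1 p + 1).val) := by
  have hz0 : z ≠ 0 := by omega
  by_cases hp : p = ⟨z, by omega⟩
  · subst hp
    simp only [iotaCoeff, iota'Coeff, Set.indicator_apply, mem_range_iota, mem_range_iota',
      Pi.one_apply, if_true, if_false, hzN, hz0, le_refl]
    ring
  · have hpz : (p : ℕ) ≠ z := fun h => hp (Fin.ext h)
    simp only [iotaCoeff, iota'Coeff, Set.indicator_apply, mem_range_iota, mem_range_iota',
      Pi.one_apply, if_neg hp, if_neg hpz]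
    split_ifs <;> (try simp only [add_zero]) <;> omega

theorem tExponent_shift_add {m N z : ℕ} (hz1 : 1 ≤ z) (hzN : z < N) (v : Fin (N + z) → ZMod m) :
    tExponent (v ∘ iota N z + 1) +
        tExponent ((v + (Set.range (iota N z)).indicator 1) ∘ iota' N z + 1) =
      2 * (((v ⟨z, by omega⟩ + 1 + 1).val : ℤ) - (v ⟨z, by omega⟩ + 1).val) +
        (tExponent (v ∘ iota' N z + 1) +
          tExponent ((v + (Set.range (iota' N z)).indicator 1) ∘ iota N z + 1)) := by
  have hcomp (x : Fin (N + z) → ZMod m) (e : Fin N → Fin (N + z)) : x ∘ e + 1 = (x + 1) ∘ e :=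
    rfl
  simp only [hcomp, tExponent_comp_iota, tExponent_comp_iota', ← Finset.sum_add_distrib,
    Pi.add_apply, Pi.one_apply, coeff_mul_val_shift hz1 hzN v]
  rw [Finset.sum_add_distrib, Fintype.sum_ite_eq']

theorem stmt15_general (m N z : ℕ) [NeZero m] (hz1 : 1 ≤ z) (hz2 : z ≤ N - 1)
    (q : ℂ) (hq0 : q ≠ 0) (hq : q ^ (2 * m) = 1) :
    Amat m N z q * Bmat m N z q = q ^ 2 • (Bmat m N z q * Amat m N z q) := by
  have hzN : z < N := by omega
  rw [Amat_eq_monomialMatrix, Bmat_eq_monomialMatrix, monomialMatrix_mul, monomialMatrix_mul,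
    smul_monomialMatrix]
  congr 1
  · funext v
    exact add_right_comm _ _ _
  · funext v
    simp only [Pi.smul_apply, smul_eq_mul]
    rw [← zpow_add₀ hq0, ← zpow_add₀ hq0, tExponent_shift_add hz1 hzN, zpow_add₀ hq0,
      zpow_two_mul_val_add_one_sub_val hq0 hq]

/-- For `1 ≤ z ≤ N−1` and `q ≠ 0` with `q^{2m} = 1`, the shifted copies of `T`
satisfy `A·B = q²·(B·A)`.  (The instance `[NeZero m]` encodes `m ≥ 1`.) -/
theorem stmt15 (m N z : ℕ) [NeZero m] (hN : 2 ≤ N) (hz1 : 1 ≤ z) (hz2 : z ≤ N - 1)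
    (q : ℂ) (hq0 : q ≠ 0) (hq : q ^ (2 * m) = 1) :
    Amat m N z q * Bmat m N z q = q ^ 2 • (Bmat m N z q * Amat m N z q) :=
  stmt15_general m N z hz1 hz2 q hq0 hq
end

section
/- Let m ≥ 2 be even, and for real a with a ≠ 1 and a ≠ −1 define X̃_j(a) = √(f(a))·X_j(a), where f(a) = ((a+1)(a^m−1))/(m(a−1)(a^m+1)) and √ is the nonnegative real square root. Then as a → −1 along real numbers a ≠ −1: (i) for every 0 ≤ j ≤ m−1 with j ≠ m/2, X̃_j(a) tends to 0; and (ii) the modulus |X̃_{m/2}(a)| tends to 1. -/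
open Finset Filter

/-- The normalization factor `f(a) = ((a+1)(a^m−1))/(m(a−1)(a^m+1))`. -/
noncomputable def f (m : ℕ) (a : ℝ) : ℝ :=
  ((a + 1) * (a ^ m - 1)) / (m * (a - 1) * (a ^ m + 1))

/-- The normalized coefficient `X̃_j(a) = √(f(a))·X_j(a)` for real `a`. -/
noncomputable def Xtilde (m j : ℕ) (a : ℝ) : ℂ :=
  (Real.sqrt (f m a) : ℂ) * X m j (a : ℂ)

/-!
Write `m = 2c` and `X_j = ∏_{k<j} N_k / D_k`. At `a = -1` one has
`N_{k+1}(-1) = -D_k(-1) = -(Q^{k+1} + Q^{-k-1}) = -2 cos((k+1)π/m)`, which vanishes only for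
`k + 1 = c`, and there `Q^c = i` gives the exact identity `D_{c-1}(a) = N_c(a) = i(1+a)`.
So `X_j` is regular at `-1` for `j < c`, the zero of `N_c` cancels the pole of `D_{c-1}` for
`j > c`, and only `X_c = X_{c-1} N_{c-1} / (i(1+a))` has a pole. Since
`f(a) = (a+1)² fReg(a)` with `fReg(-1) = 1/4`, the factor `√f` kills the regular `X_j`, while
telescoping gives `X_{c-1}(-1) N_{c-1}(-1) = ±2`, so `|X̃_c| → (1/2)·2 = 1`.
-/

open Complex Topology

lemma Q_zpow (m : ℕ) (n : ℤ) : Q m ^ n = exp ((n * Real.pi / m : ℝ) * I) := by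
  rw [Q, ← exp_int_mul]
  push_cast
  ring_nf

lemma Q_zpow_add_zpow_neg (m : ℕ) (n : ℤ) :
    Q m ^ n + Q m ^ (-n) = (2 * Real.cos (n * Real.pi / m) : ℝ) := by
  rw [Q_zpow, Q_zpow]
  push_cast
  rw [two_cos]
  ring_nf

lemma Real.cos_nat_mul_pi_div_ne_zero {m n : ℕ} (hn : n ≤ m) (h : 2 * n ≠ m) :
    Real.cos (n * Real.pi / m) ≠ 0 := by
  rcases Nat.eq_zero_or_pos m with rfl | hm
  · simp
  have hm' : (0 : ℝ) < m := by exact_mod_cast hm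
  have hmem : n * Real.pi / m ∈ Set.Icc 0 Real.pi := by
    refine ⟨by positivity, ?_⟩
    rw [div_le_iff₀ hm', mul_comm]
    gcongr
  intro hcos
  rw [← Real.cos_pi_div_two] at hcos
  have := Real.injOn_cos hmem ⟨by positivity, by linarith [Real.pi_pos]⟩ hcos
  field_simp at this
  exact h (by exact_mod_cast (by linarith : (2 * n : ℝ) = m))

lemma tendsto_ofReal_nhdsNE (x : ℝ) : Tendsto ((↑) : ℝ → ℂ) (𝓝[≠] x) (𝓝[≠] (x : ℂ)) :=
  continuous_ofReal.continuousWithinAt.tendsto_nhdsWithin fun _ h ↦ by simpa using h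

noncomputable def Xnum (m k : ℕ) (a : ℂ) : ℂ := a * Q m ^ k - Q m ^ (-(k : ℤ))

noncomputable def Xden (m k : ℕ) (a : ℂ) : ℂ := Q m ^ (k + 1) - a * Q m ^ (-((k : ℤ) + 1))

lemma X_eq_prod (m j : ℕ) (a : ℂ) : X m j a = ∏ k ∈ range j, Xnum m k a / Xden m k a := rfl

lemma X_succ (m j : ℕ) (a : ℂ) : X m (j + 1) a = X m j a * (Xnum m j a / Xden m j a) :=
  prod_range_succ _ _

@[fun_prop]
lemma continuous_Xnum (m k : ℕ) : Continuous (Xnum m k) := by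
  unfold Xnum; fun_prop

@[fun_prop]
lemma continuous_Xden (m k : ℕ) : Continuous (Xden m k) := by
  unfold Xden; fun_prop

lemma Xden_neg_one (m k : ℕ) : Xden m k (-1) = Q m ^ ((k : ℤ) + 1) + Q m ^ (-((k : ℤ) + 1)) := by
  rw [Xden, ← zpow_natCast]
  push_cast
  ring

lemma Xnum_succ_neg_one (m k : ℕ) : Xnum m (k + 1) (-1) = -Xden m k (-1) := by
  rw [Xden_neg_one, Xnum, ← zpow_natCast]
  push_cast
  ring

lemma Xden_neg_one_ne_zero {m k : ℕ} (hk : k + 1 ≤ m) (h : 2 * (k + 1) ≠ m) :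
    Xden m k (-1) ≠ 0 := by
  rw [Xden_neg_one, Q_zpow_add_zpow_neg, ofReal_ne_zero]
  exact mul_ne_zero two_ne_zero (by exact_mod_cast Real.cos_nat_mul_pi_div_ne_zero hk h)

lemma continuousAt_prod_factors {m : ℕ} {s : Finset ℕ} (h : ∀ k ∈ s, Xden m k (-1) ≠ 0) :
    ContinuousAt (fun a ↦ ∏ k ∈ s, Xnum m k a / Xden m k a) (-1) :=
  tendsto_finsetProd s fun k hk ↦
    (continuous_Xnum m k).continuousAt.div (continuous_Xden m k).continuousAt (h k hk)

lemma X_mul_Xnum_neg_one {m n : ℕ} (h : ∀ k < n, Xden m k (-1) ≠ 0) :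
    X m n (-1) * Xnum m n (-1) = -2 * (-1) ^ n := by
  induction n with
  | zero => norm_num [X, Xnum]
  | succ n ih =>
    rw [X_succ, Xnum_succ_neg_one, pow_succ, ← mul_assoc, ← ih fun k hk ↦ h k (by omega)]
    field_simp [h n n.lt_succ_self]

section Half

variable {c : ℕ}

lemma Q_two_mul_zpow_self (hc : c ≠ 0) : Q (2 * c) ^ (c : ℤ) = I := by
  rw [Q_zpow]
  convert exp_pi_div_two_mul_I using 3
  push_cast
  field_simp

lemma Q_two_mul_zpow_neg_self (hc : c ≠ 0) : Q (2 * c) ^ (-(c : ℤ)) = -I := by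
  rw [zpow_neg, Q_two_mul_zpow_self hc, inv_I]

lemma Xnum_self (hc : c ≠ 0) (a : ℂ) : Xnum (2 * c) c a = I * (1 + a) := by
  rw [Xnum, ← zpow_natCast, Q_two_mul_zpow_self hc, Q_two_mul_zpow_neg_self hc]
  ring

lemma Xden_pred (hc : c ≠ 0) (a : ℂ) : Xden (2 * c) (c - 1) a = I * (1 + a) := by
  have h : ((c - 1 : ℕ) : ℤ) + 1 = c := by omega
  rw [Xden, Nat.sub_add_cancel (Nat.one_le_iff_ne_zero.2 hc), h, ← zpow_natCast,
    Q_two_mul_zpow_self hc, Q_two_mul_zpow_neg_self hc]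
  ring

lemma X_self_eq (hc : c ≠ 0) (a : ℂ) :
    X (2 * c) c a = X (2 * c) (c - 1) a * Xnum (2 * c) (c - 1) a / (I * (1 + a)) := by
  have h := X_succ (2 * c) (c - 1) a
  rw [Nat.sub_add_cancel (Nat.one_le_iff_ne_zero.2 hc)] at h
  rw [h, Xden_pred hc, mul_div_assoc]

lemma X_succ_self_eq (hc : c ≠ 0) {a : ℂ} (ha : a ≠ -1) :
    X (2 * c) (c + 1) a = X (2 * c) (c - 1) a * Xnum (2 * c) (c - 1) a / Xden (2 * c) c a := by
  have hI : I * (1 + a) ≠ 0 := mul_ne_zero I_ne_zero fun h ↦ ha (by linear_combination h)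
  rw [X_succ, X_self_eq hc, Xnum_self hc, div_mul_div_cancel₀ hI]

lemma continuousAt_X_pred_mul_Xnum :
    ContinuousAt (fun a ↦ X (2 * c) (c - 1) a * Xnum (2 * c) (c - 1) a) (-1) :=
  (continuousAt_prod_factors fun k hk ↦ by
    have := mem_range.1 hk
    exact Xden_neg_one_ne_zero (by omega) (by omega)).mul (continuous_Xnum _ _).continuousAt

lemma norm_X_pred_mul_Xnum_neg_one :
    ‖X (2 * c) (c - 1) (-1) * Xnum (2 * c) (c - 1) (-1)‖ = 2 := by
  rw [X_mul_Xnum_neg_one fun k hk ↦ Xden_neg_one_ne_zero (by omega) (by omega)]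
  simp

lemma exists_tendsto_X {j : ℕ} (hj : j < 2 * c) (hjc : j ≠ c) :
    ∃ L, Tendsto (X (2 * c) j) (𝓝[≠] (-1)) (𝓝 L) := by
  rcases lt_or_gt_of_ne hjc with hlt | hgt
  · refine ⟨_, (continuousAt_prod_factors fun k hk ↦ ?_).tendsto.mono_left nhdsWithin_le_nhds⟩
    have := mem_range.1 hk
    exact Xden_neg_one_ne_zero (by omega) (by omega)
  have hc : c ≠ 0 := by omega
  have hG : ContinuousAt (fun a ↦ X (2 * c) (c - 1) a * Xnum (2 * c) (c - 1) a /
      Xden (2 * c) c a * ∏ k ∈ Ico (c + 1) j, Xnum (2 * c) k a / Xden (2 * c) k a) (-1) :=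
    (continuousAt_X_pred_mul_Xnum.div (continuous_Xden _ _).continuousAt
      (Xden_neg_one_ne_zero (by omega) (by omega))).mul
      (continuousAt_prod_factors fun k hk ↦ by
        have := mem_Ico.1 hk
        exact Xden_neg_one_ne_zero (by omega) (by omega))
  refine ⟨_, (hG.tendsto.mono_left nhdsWithin_le_nhds).congr' ?_⟩
  filter_upwards [self_mem_nhdsWithin] with a ha
  rw [X_eq_prod _ j, ← prod_range_mul_prod_Ico _ hgt, ← X_eq_prod, X_succ_self_eq hc ha]

noncomputable def fReg (c : ℕ) (a : ℝ) : ℝ :=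
  (∑ i ∈ range c, (a ^ 2) ^ i) / (2 * c * (a ^ (2 * c) + 1))

lemma f_eq_sq_mul_fReg {a : ℝ} (ha : a ≠ 1) : f (2 * c) a = (a + 1) ^ 2 * fReg c a := by
  have hgeom : a ^ (2 * c) - 1 = (∑ i ∈ range c, (a ^ 2) ^ i) * ((a + 1) * (a - 1)) := by
    rw [pow_mul, ← geom_sum_mul]
    ring
  have hden : 0 < a ^ (2 * c) + 1 := by linarith [(even_two_mul c).pow_nonneg a]
  have ha1 : a - 1 ≠ 0 := sub_ne_zero.2 ha
  rw [f, fReg, hgeom]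
  push_cast
  field_simp

lemma continuousAt_fReg (hc : c ≠ 0) : ContinuousAt (fReg c) (-1) := by
  unfold fReg
  exact ContinuousAt.div (by fun_prop) (by fun_prop) (by rw [pow_mul]; norm_num [hc])

lemma fReg_neg_one (hc : c ≠ 0) : fReg c (-1) = 1 / 4 := by
  rw [fReg, pow_mul]
  norm_num
  field_simp
  norm_num

lemma tendsto_f_neg_one (hc : c ≠ 0) : Tendsto (f (2 * c)) (𝓝 (-1)) (𝓝 0) := by
  have h : Tendsto (fun a ↦ (a + 1) ^ 2 * fReg c a) (𝓝 (-1)) (𝓝 0) := by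
    simpa using (((continuous_add_const 1).pow 2).tendsto (-1)).mul (continuousAt_fReg hc).tendsto
  refine h.congr' ?_
  filter_upwards [eventually_ne_nhds (by norm_num : (-1 : ℝ) ≠ 1)] with a ha
  exact (f_eq_sq_mul_fReg ha).symm

lemma norm_Xtilde_self (hc : c ≠ 0) {a : ℝ} (ha : a ≠ -1) (ha' : a ≠ 1) :
    ‖Xtilde (2 * c) c a‖ = √(fReg c a) * ‖X (2 * c) (c - 1) a * Xnum (2 * c) (c - 1) a‖ := by
  have habs : |a + 1| ≠ 0 := abs_ne_zero.2 fun h ↦ ha (by linarith)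
  rw [Xtilde, X_self_eq hc, norm_mul, norm_div, norm_mul I, norm_I, one_mul, norm_real,
    Real.norm_of_nonneg (Real.sqrt_nonneg _), f_eq_sq_mul_fReg ha', Real.sqrt_mul (sq_nonneg _),
    Real.sqrt_sq_eq_abs, show (1 : ℂ) + a = ((a + 1 : ℝ) : ℂ) by push_cast; ring, norm_real,
    Real.norm_eq_abs]
  field_simp

lemma tendsto_Xtilde_of_ne {j : ℕ} (hj : j < 2 * c) (hjc : j ≠ c) :
    Tendsto (Xtilde (2 * c) j) (𝓝[≠] (-1)) (𝓝 0) := by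
  obtain ⟨L, hL⟩ := exists_tendsto_X hj hjc
  have hc : c ≠ 0 := by omega
  have hsqrt : Tendsto (fun a ↦ (√(f (2 * c) a) : ℂ)) (𝓝 (-1)) (𝓝 0) := by
    simpa using (tendsto_f_neg_one hc).sqrt.ofReal
  have h := (hsqrt.mono_left nhdsWithin_le_nhds).mul
    (hL.comp (by simpa using tendsto_ofReal_nhdsNE (-1)))
  rw [zero_mul] at h
  exact h

lemma tendsto_norm_Xtilde_self (hc : c ≠ 0) :
    Tendsto (fun a ↦ ‖Xtilde (2 * c) c a‖) (𝓝[≠] (-1)) (𝓝 1) := by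
  have hres : ContinuousAt (fun a : ℝ ↦ X (2 * c) (c - 1) a * Xnum (2 * c) (c - 1) a) (-1) :=
    continuousAt_X_pred_mul_Xnum.comp_of_eq continuous_ofReal.continuousAt (by simp)
  have h := (continuousAt_fReg hc).tendsto.sqrt.mul hres.tendsto.norm
  simp only [fReg_neg_one hc, ofReal_neg, ofReal_one, norm_X_pred_mul_Xnum_neg_one] at h
  rw [show (1 / 4 : ℝ) = (1 / 2) ^ 2 by norm_num, Real.sqrt_sq (by norm_num),
    one_div_mul_cancel two_ne_zero] at h
  refine (h.mono_left nhdsWithin_le_nhds).congr' ?_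
  filter_upwards [self_mem_nhdsWithin,
    nhdsWithin_le_nhds (eventually_ne_nhds (by norm_num : (-1 : ℝ) ≠ 1))] with a ha ha'
  exact (norm_Xtilde_self hc ha ha').symm

end Half

/-- For even `m`, as `a → −1` (along real `a ≠ −1`) the normalized coefficients
`X̃_j(a)` tend to `0` for `j ≠ m/2`, while `|X̃_{m/2}(a)|` tends to `1`. -/
theorem stmt18 (m : ℕ) (hm : 2 ≤ m) (hme : Even m) :
    (∀ j : ℕ, j ≤ m - 1 → j ≠ m / 2 →
        Tendsto (fun a : ℝ => Xtilde m j a) (nhdsWithin (-1) {(-1)}ᶜ) (nhds 0)) ∧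
      Tendsto (fun a : ℝ => ‖Xtilde m (m / 2) a‖)
        (nhdsWithin (-1) {(-1)}ᶜ) (nhds 1) := by
  obtain ⟨c, rfl⟩ := hme
  rw [← two_mul] at hm ⊢
  rw [Nat.mul_div_cancel_left c two_pos]
  exact ⟨fun j hj hjc ↦ tendsto_Xtilde_of_ne (by omega) hjc, tendsto_norm_Xtilde_self (by omega)⟩
end
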